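/- J-bicontractivity of Θ on the right half-plane: Assume in addition that Γ is positive definite. Then for every λ ∈ ℂ with Re λ > 0 such that λI_n − A is invertible, both J − Θ(λ) J Θ(λ)ᴴ and J − Θ(λ)ᴴ J Θ(λ) are positive semidefinite. -/

import Mathlib

open Matrix
open scoped Matrix ComplexOrder

/-- The signature matrix `J = diag(I_p, −I_m)`. -/
def signatureJ (p m : ℕ) : Matrix (Fin p ⊕ Fin m) (Fin p ⊕ Fin m) ℂ :=
  Matrix.fromBlocks 1 0 0 (-1)

/-- The realization `Θ(λ) = I − C (λI − A)⁻¹ Γ⁻¹ Cᴴ J`. -/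
noncomputable def ThetaRealization (n p m : ℕ) (A : Matrix (Fin n) (Fin n) ℂ)
    (C : Matrix (Fin p ⊕ Fin m) (Fin n) ℂ) (Γ : Matrix (Fin n) (Fin n) ℂ) (lam : ℂ) :
    Matrix (Fin p ⊕ Fin m) (Fin p ⊕ Fin m) ℂ :=
  1 - C * (lam • (1 : Matrix (Fin n) (Fin n) ℂ) - A)⁻¹ * Γ⁻¹ * Cᴴ * signatureJ p m

/-!
Write `Θ = 1 - K J` with `K = C (λ - A)⁻¹ Γ⁻¹ Cᴴ`. As `J = Jᴴ = J⁻¹`, the defects are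
`J - Θ J Θᴴ = K + Kᴴ - K J Kᴴ` and `J - Θᴴ J Θ = J (K + Kᴴ - Kᴴ J K) J`. Shifted by `λ`, the
Lyapunov identity reads `Γ (λ - A) + (λ - A)ᴴ Γ = 2 Re λ · Γ + Cᴴ J C`. Conjugating its image under
`X ↦ Γ⁻¹ X Γ⁻¹` by `C (λ - A)⁻¹`, resp. the identity itself by `C Γ⁻¹ (λ - A)⁻ᴴ`, turns the two
bracketed expressions into `2 Re λ` times congruences of `Γ⁻¹`, resp. `Γ`, which are positive
semidefinite when `Γ ≻ 0` and `Re λ > 0`.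
-/

section StarRing

variable {α : Type*} [Ring α] [StarRing α] {J : α}

theorem sub_one_sub_mul_mul_mul_star (hJ : IsSelfAdjoint J) (hJJ : J * J = 1) (K : α) :
    J - (1 - K * J) * J * star (1 - K * J) = K + star K - K * J * star K := by
  have hJJ' (x : α) : J * (J * x) = x := by rw [← mul_assoc, hJJ, one_mul]
  simp only [star_sub, star_one, star_mul, hJ.star_eq, mul_sub, sub_mul, one_mul, mul_one,
    mul_assoc, hJJ, hJJ']
  abel

theorem sub_star_one_sub_mul_mul_mul (hJ : IsSelfAdjoint J) (K : α) :
    J - star (1 - K * J) * J * (1 - K * J) = J * (K + star K - star K * J * K) * J := by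
  simp only [star_sub, star_one, star_mul, hJ.star_eq, mul_sub, sub_mul, mul_add, add_mul,
    one_mul, mul_one, mul_assoc]
  abel

end StarRing

theorem signatureJ_isHermitian (p m : ℕ) : (signatureJ p m).IsHermitian := by
  simp [IsHermitian, signatureJ, fromBlocks_conjTranspose]

theorem signatureJ_mul_self (p m : ℕ) : signatureJ p m * signatureJ p m = 1 := by
  simp [signatureJ, fromBlocks_multiply, ← fromBlocks_one]

section Lyapunov

variable {𝕜 : Type*} [CommRing 𝕜] [StarRing 𝕜] {k l : Type*} [Fintype k] [Fintype l]
  [DecidableEq k] [DecidableEq l] {Γ A M : Matrix l l 𝕜}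

theorem lyapunov_smul_one_sub (h : Γ * A + Aᴴ * Γ = -M) (c : 𝕜) :
    Γ * (c • 1 - A) + (c • 1 - A)ᴴ * Γ = (c + star c) • Γ + M := by
  have e : Γ * (c • 1 - A) + (c • 1 - A)ᴴ * Γ = (c + star c) • Γ - (Γ * A + Aᴴ * Γ) := by
    simp only [conjTranspose_sub, conjTranspose_smul, conjTranspose_one, mul_sub, sub_mul,
      mul_smul_comm, smul_mul_assoc, mul_one, one_mul, add_smul]
    abel
  rw [e, h, sub_neg_eq_add]

theorem lyapunov_smul_one_sub_inv (h : Γ * A + Aᴴ * Γ = -M) (hΓ : IsUnit Γ.det) (c : 𝕜) :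
    (c • 1 - A) * Γ⁻¹ + Γ⁻¹ * (c • 1 - A)ᴴ = (c + star c) • Γ⁻¹ + Γ⁻¹ * M * Γ⁻¹ := by
  have e := congrArg (fun X => Γ⁻¹ * X * Γ⁻¹) (lyapunov_smul_one_sub h c)
  simpa only [mul_add, add_mul, Matrix.mul_smul, Matrix.smul_mul, ← Matrix.mul_assoc,
    nonsing_inv_mul _ hΓ, one_mul, mul_nonsing_inv_cancel_right _ _ hΓ] using e

variable {C : Matrix k l 𝕜} {J : Matrix k k 𝕜} {c : 𝕜}

theorem sub_realization_mul_mul_conjTranspose (hJ : J.IsHermitian) (hJJ : J * J = 1)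
    (hΓH : Γ.IsHermitian) (hΓ : IsUnit Γ.det) (h : Γ * A + Aᴴ * Γ = -(Cᴴ * J * C))
    (hB : IsUnit (c • 1 - A).det) :
    J - (1 - C * (c • 1 - A)⁻¹ * Γ⁻¹ * Cᴴ * J) * J * (1 - C * (c • 1 - A)⁻¹ * Γ⁻¹ * Cᴴ * J)ᴴ =
      (c + star c) • (C * (c • 1 - A)⁻¹ * Γ⁻¹ * (C * (c • 1 - A)⁻¹)ᴴ) := by
  rw [← star_eq_conjTranspose (1 - _), sub_one_sub_mul_mul_mul_star hJ.isSelfAdjoint hJJ,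
    star_eq_conjTranspose]
  have hBH : IsUnit (c • 1 - A)ᴴ.det := by rw [det_conjTranspose]; exact hB.star
  have e := congrArg (fun X => C * (c • 1 - A)⁻¹ * X * (C * (c • 1 - A)⁻¹)ᴴ)
    (lyapunov_smul_one_sub_inv h hΓ c)
  simp only [conjTranspose_mul, conjTranspose_conjTranspose, conjTranspose_nonsing_inv,
    hΓH.inv.eq, Matrix.mul_add, Matrix.add_mul, Matrix.mul_smul, Matrix.smul_mul,
    Matrix.mul_assoc, nonsing_inv_mul_cancel_left _ _ hB, mul_nonsing_inv_cancel_left _ _ hBH]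
    at e ⊢
  rw [← sub_eq_iff_eq_add] at e
  rw [← e]
  abel

theorem sub_conjTranspose_realization_mul_mul (hJ : J.IsHermitian) (hΓH : Γ.IsHermitian)
    (hΓ : IsUnit Γ.det) (h : Γ * A + Aᴴ * Γ = -(Cᴴ * J * C)) (hB : IsUnit (c • 1 - A).det) :
    J - (1 - C * (c • 1 - A)⁻¹ * Γ⁻¹ * Cᴴ * J)ᴴ * J * (1 - C * (c • 1 - A)⁻¹ * Γ⁻¹ * Cᴴ * J) =
      J * ((c + star c) • (C * Γ⁻¹ * (c • 1 - A)⁻¹ᴴ * Γ * (C * Γ⁻¹ * (c • 1 - A)⁻¹ᴴ)ᴴ)) * J := by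
  rw [← star_eq_conjTranspose (1 - _), sub_star_one_sub_mul_mul_mul hJ.isSelfAdjoint,
    star_eq_conjTranspose]
  congr 2
  have hBH : IsUnit (c • 1 - A)ᴴ.det := by rw [det_conjTranspose]; exact hB.star
  have e := congrArg (fun X => C * Γ⁻¹ * (c • 1 - A)⁻¹ᴴ * X * (C * Γ⁻¹ * (c • 1 - A)⁻¹ᴴ)ᴴ)
    (lyapunov_smul_one_sub h c)
  simp only [conjTranspose_mul, conjTranspose_conjTranspose, conjTranspose_nonsing_inv,
    hΓH.inv.eq, Matrix.mul_add, Matrix.add_mul, Matrix.mul_smul, Matrix.smul_mul,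
    Matrix.mul_assoc, mul_nonsing_inv_cancel_left _ _ hB, nonsing_inv_mul_cancel_left _ _ hBH,
    nonsing_inv_mul_cancel_left _ _ hΓ, mul_nonsing_inv_cancel_left _ _ hΓ] at e ⊢
  rw [← sub_eq_iff_eq_add] at e
  rw [← e]
  abel

end Lyapunov

theorem theta_J_bicontractive_right_half_plane_general
    (n p m : ℕ) (A : Matrix (Fin n) (Fin n) ℂ)
    (C : Matrix (Fin p ⊕ Fin m) (Fin n) ℂ) (Γ : Matrix (Fin n) (Fin n) ℂ)
    (hΓpos : Γ.PosDef)
    (hLyap : Γ * A + Aᴴ * Γ = -(Cᴴ * signatureJ p m * C))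
    (lam : ℂ) (hre : 0 < lam.re)
    (hlam : IsUnit (lam • (1 : Matrix (Fin n) (Fin n) ℂ) - A).det) :
    (signatureJ p m -
        ThetaRealization n p m A C Γ lam * signatureJ p m *
          (ThetaRealization n p m A C Γ lam)ᴴ).PosSemidef ∧
      (signatureJ p m -
        (ThetaRealization n p m A C Γ lam)ᴴ * signatureJ p m *
          ThetaRealization n p m A C Γ lam).PosSemidef := by
  have hJ := signatureJ_isHermitian p m
  have hΓ : IsUnit Γ.det := (isUnit_iff_isUnit_det Γ).mp hΓpos.isUnit
  have hc : 0 ≤ lam + star lam := by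
    rw [Complex.star_def, Complex.add_conj, Complex.zero_le_real]
    positivity
  constructor
  · rw [ThetaRealization, sub_realization_mul_mul_conjTranspose hJ (signatureJ_mul_self p m)
      hΓpos.isHermitian hΓ hLyap hlam]
    exact (hΓpos.inv.posSemidef.mul_mul_conjTranspose_same _).smul hc
  · rw [ThetaRealization, sub_conjTranspose_realization_mul_mul hJ hΓpos.isHermitian hΓ hLyap hlam]
    have h := ((hΓpos.posSemidef.mul_mul_conjTranspose_same
      (C * Γ⁻¹ * (lam • 1 - A)⁻¹ᴴ)).smul hc).conjTranspose_mul_mul_same (signatureJ p m)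
    rwa [hJ.eq] at h

/-- **`J`-bicontractivity of `Θ` on the right half-plane**: if moreover `Γ ≻ 0`, then for
every `λ` with `Re λ > 0` at which `λI − A` is invertible, both `J − Θ(λ) J Θ(λ)ᴴ` and
`J − Θ(λ)ᴴ J Θ(λ)` are positive semidefinite. -/
theorem theta_J_bicontractive_right_half_plane
    (n p m : ℕ) (A : Matrix (Fin n) (Fin n) ℂ)
    (C : Matrix (Fin p ⊕ Fin m) (Fin n) ℂ) (Γ : Matrix (Fin n) (Fin n) ℂ)
    (hΓH : Γ.IsHermitian) (hΓinv : IsUnit Γ.det) (hΓpos : Γ.PosDef)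
    (hLyap : Γ * A + Aᴴ * Γ = -(Cᴴ * signatureJ p m * C))
    (lam : ℂ) (hre : 0 < lam.re)
    (hlam : IsUnit (lam • (1 : Matrix (Fin n) (Fin n) ℂ) - A).det) :
    (signatureJ p m -
        ThetaRealization n p m A C Γ lam * signatureJ p m *
          (ThetaRealization n p m A C Γ lam)ᴴ).PosSemidef ∧
      (signatureJ p m -
        (ThetaRealization n p m A C Γ lam)ᴴ * signatureJ p m *
          ThetaRealization n p m A C Γ lam).PosSemidef :=
  theta_J_bicontractive_right_half_plane_general n p m A C Γ hΓpos hLyap lam hre hlam
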